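/- arXiv:2405.13789 — 2 statements merged into one kernel-verified Lean document; each statement's English description precedes it below -/
import Mathlib

section
/- Let n ≥ 3, let j be a proper divisor of n (1 ≤ j < n), and let k = n/j. Then: (a) the subspace {X ∈ ℝ^{n−1} : ℛ_n^j X = X} has real dimension j − 1; (b) the subspace {X ∈ ℝ^{n−1} : ℛ_n^j X = −X} has real dimension 0 if k is odd, and real dimension j if k is even. Consequently, ℓ₊^j(n) := {X ∈ S^{n−2} : ℛ_n^j X = X} is homeomorphic to the sphere S^{j−2} (empty when j = 1), and ℓ₋^j(n) := {X ∈ S^{n−2} : ℛ_n^j X = −X} is empty when k is odd and homeomorphic to the sphere S^{j−1} when k is even. -/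
noncomputable section

/-- The block-rotation matrix `ℛ_n`: block diagonal with `2 × 2` rotation blocks
`R_{2π/n}, R_{2·2π/n}, …` (the block with index `b` rotates by `(b+1)·2π/n`), followed,
when `n` is even, by a final `1 × 1` entry `−1`. -/
def Rmat (n : ℕ) : Matrix (Fin (n - 1)) (Fin (n - 1)) ℝ :=
  Matrix.of fun i j =>
    let b : ℕ := (i : ℕ) / 2
    let θ : ℝ := 2 * Real.pi * ((b : ℝ) + 1) / n
    if (i : ℕ) % 2 = 0 then
      if (i : ℕ) + 1 < n - 1 then
        if (j : ℕ) = (i : ℕ) then Real.cos θ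
        else if (j : ℕ) = (i : ℕ) + 1 then -Real.sin θ else 0
      else
        if j = i then -1 else 0
    else
      if (j : ℕ) = (i : ℕ) - 1 then Real.sin θ
      else if (j : ℕ) = (i : ℕ) then Real.cos θ else 0

def bmat (N : ℕ) (F : ℕ → ℝ) (ε : ℝ) : Matrix (Fin N) (Fin N) ℝ :=
  Matrix.of fun i j =>
    if (i : ℕ) % 2 = 0 then
      if (i : ℕ) + 1 < N then
        if (j : ℕ) = (i : ℕ) then Real.cos (F ((i : ℕ) / 2))
        else if (j : ℕ) = (i : ℕ) + 1 then -Real.sin (F ((i : ℕ) / 2)) else 0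
      else
        if j = i then ε else 0
    else
      if (j : ℕ) = (i : ℕ) - 1 then Real.sin (F ((i : ℕ) / 2))
      else if (j : ℕ) = (i : ℕ) then Real.cos (F ((i : ℕ) / 2)) else 0

lemma rmat_eq (n : ℕ) :
    Rmat n = bmat (n - 1) (fun b => 2 * Real.pi * ((b : ℝ) + 1) / n) (-1) := rfl

variable {N : ℕ} {F G : ℕ → ℝ} {ε ε' : ℝ}

lemma bmat_apply_even {i : Fin N} (h0 : (i : ℕ) % 2 = 0) (hlt : (i : ℕ) + 1 < N) (m : Fin N) :
    bmat N F ε i m = if (m : ℕ) = (i : ℕ) then Real.cos (F ((i : ℕ) / 2))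
      else if (m : ℕ) = (i : ℕ) + 1 then -Real.sin (F ((i : ℕ) / 2)) else 0 := by
  simp [bmat, h0, hlt]

lemma bmat_apply_last {i : Fin N} (h0 : (i : ℕ) % 2 = 0) (hge : ¬ ((i : ℕ) + 1 < N)) (m : Fin N) :
    bmat N F ε i m = if m = i then ε else 0 := by
  simp [bmat, h0, hge]

lemma bmat_apply_odd {i : Fin N} (h1 : (i : ℕ) % 2 = 1) (m : Fin N) :
    bmat N F ε i m = if (m : ℕ) = (i : ℕ) - 1 then Real.sin (F ((i : ℕ) / 2))
      else if (m : ℕ) = (i : ℕ) then Real.cos (F ((i : ℕ) / 2)) else 0 := by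
  simp [bmat, Nat.mod_two_ne_zero.mpr h1, h1]

lemma sum_two {f : Fin N → ℝ} {m1 m2 : Fin N} (hne : m1 ≠ m2)
    (h : ∀ m, m ≠ m1 → m ≠ m2 → f m = 0) : ∑ m, f m = f m1 + f m2 := by
  rw [← Finset.sum_pair hne]
  exact (Finset.sum_subset (Finset.subset_univ _) (fun x _ hx => by
    simp only [Finset.mem_insert, Finset.mem_singleton] at hx
    push_neg at hx
    exact h x hx.1 hx.2)).symm

lemma bmat_mul :
    bmat N F ε * bmat N G ε' = bmat N (fun b => F b + G b) (ε * ε') := by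
  ext i kk
  rw [Matrix.mul_apply]
  rcases Nat.even_or_odd (i : ℕ) with he | ho
  · have h0 : (i : ℕ) % 2 = 0 := Nat.even_iff.mp he
    by_cases hlt : (i : ℕ) + 1 < N
    · set i' : Fin N := ⟨(i : ℕ) + 1, hlt⟩ with hi'
      have hne : i ≠ i' := by
        intro h; apply absurd (congrArg Fin.val h); simp [hi']
      have h1' : ((i' : ℕ)) % 2 = 1 := by simp [hi']; omega
      have hdiv : ((i' : ℕ)) / 2 = (i : ℕ) / 2 := by simp [hi']; omega
      rw [sum_two hne (fun m hm1 hm2 => by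
        rw [bmat_apply_even h0 hlt]
        have : (m : ℕ) ≠ (i : ℕ) := fun h => hm1 (Fin.ext h)
        have : (m : ℕ) ≠ (i : ℕ) + 1 := fun h => hm2 (Fin.ext h)
        simp_all)]
      rw [bmat_apply_even h0 hlt i, bmat_apply_even h0 hlt i',
        bmat_apply_even h0 hlt kk, bmat_apply_odd h1' kk,
        bmat_apply_even (F := fun b => F b + G b) (ε := ε * ε') h0 hlt kk]
      have hv : (i' : ℕ) = (i : ℕ) + 1 := rfl
      rw [hdiv, hv]
      have h2 : (i : ℕ) + 1 - 1 = (i : ℕ) := rfl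
      rw [h2]
      split_ifs <;>
        first
          | (exfalso; omega)
          | (exfalso; exact absurd trivial ‹¬True›)
          | (rw [Real.cos_add]; try ring)
          | (rw [Real.sin_add]; try ring)
          | ring
    · rw [Finset.sum_eq_single i (fun m _ hm => by
        rw [bmat_apply_last h0 hlt]; simp [hm]) (by simp)]
      rw [bmat_apply_last h0 hlt i, bmat_apply_last h0 hlt kk,
        bmat_apply_last (F := fun b => F b + G b) (ε := ε * ε') h0 hlt kk]
      split_ifs <;> simp_all
  · have h1 : (i : ℕ) % 2 = 1 := Nat.odd_iff.mp ho
    have hpos : 1 ≤ (i : ℕ) := by omega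
    have hplt : (i : ℕ) - 1 < N := lt_of_le_of_lt (Nat.sub_le _ _) i.isLt
    set p : Fin N := ⟨(i : ℕ) - 1, hplt⟩ with hp
    have hpv : (p : ℕ) = (i : ℕ) - 1 := rfl
    have hne : p ≠ i := by
      intro h; apply absurd (congrArg Fin.val h); simp [hpv]; omega
    have hp0 : (p : ℕ) % 2 = 0 := by rw [hpv]; omega
    have hplt2 : (p : ℕ) + 1 < N := by rw [hpv]; have := i.isLt; omega
    have hpdiv : (p : ℕ) / 2 = (i : ℕ) / 2 := by rw [hpv]; omega
    have hp1 : (p : ℕ) + 1 = (i : ℕ) := by rw [hpv]; omega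
    rw [sum_two hne (fun m hm1 hm2 => by
      rw [bmat_apply_odd h1]
      have e1 : (m : ℕ) ≠ (i : ℕ) - 1 := fun h => hm1 (Fin.ext (by rw [h, hpv]))
      have e2 : (m : ℕ) ≠ (i : ℕ) := fun h => hm2 (Fin.ext h)
      simp_all)]
    rw [bmat_apply_odd h1 p, bmat_apply_odd h1 i,
      bmat_apply_even hp0 hplt2 kk, bmat_apply_odd h1 kk,
      bmat_apply_odd (F := fun b => F b + G b) (ε := ε * ε') h1 kk]
    rw [hpdiv, hpv, hp1]
    split_ifs <;>
      first
        | (exfalso; omega)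
        | (exfalso; exact absurd trivial ‹¬True›)
        | (rw [Real.cos_add]; try ring)
        | (rw [Real.sin_add]; try ring)
        | ring

lemma bmat_one : bmat N (fun _ => 0) (1 : ℝ) = 1 := by
  ext i k
  simp only [bmat, Matrix.of_apply, Real.cos_zero, Real.sin_zero, neg_zero, Matrix.one_apply]
  by_cases h2 : (i : ℕ) % 2 = 0
  · rw [if_pos h2]
    by_cases hlt : (i : ℕ) + 1 < N
    · rw [if_pos hlt]
      by_cases hk : (k : ℕ) = (i : ℕ)
      · rw [if_pos hk, if_pos (Fin.ext hk).symm]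
      · rw [if_neg hk, if_neg (fun h => hk (congrArg Fin.val h).symm)]
        split_ifs <;> rfl
    · rw [if_neg hlt]
      by_cases hk : k = i
      · rw [if_pos hk, if_pos hk.symm]
      · rw [if_neg hk, if_neg (fun h => hk h.symm)]
  · rw [if_neg h2]
    by_cases hk : (k : ℕ) = (i : ℕ)
    · rw [if_neg (show ¬ (k:ℕ) = (i:ℕ) - 1 by omega), if_pos hk, if_pos (Fin.ext hk).symm]
    · rw [if_neg (show ¬ i = k from fun h => hk (congrArg Fin.val h).symm)]
      split_ifs <;> simp_all

lemma bmat_pow (j : ℕ) :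
    (bmat N F ε) ^ j = bmat N (fun b => (j : ℝ) * F b) (ε ^ j) := by
  induction j with
  | zero =>
    simp only [pow_zero, Nat.cast_zero]
    rw [show (fun b => (0:ℝ) * F b) = fun _ => (0:ℝ) by funext b; ring, bmat_one]
  | succ m ih =>
    have hF : (fun b => (m : ℝ) * F b + F b) = (fun b => ((m + 1 : ℕ) : ℝ) * F b) := by
      funext b; push_cast; ring
    rw [pow_succ, ih, bmat_mul, hF, ← pow_succ]

lemma mulVec_apply_even {i : Fin N} (h0 : (i : ℕ) % 2 = 0) (hlt : (i : ℕ) + 1 < N)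
    (X : Fin N → ℝ) :
    (bmat N F ε).mulVec X i
      = Real.cos (F ((i : ℕ) / 2)) * X i - Real.sin (F ((i : ℕ) / 2)) * X ⟨(i : ℕ) + 1, hlt⟩ := by
  set i' : Fin N := ⟨(i : ℕ) + 1, hlt⟩ with hi'
  have hne : i ≠ i' := by intro h; apply absurd (congrArg Fin.val h); simp [hi']
  show ∑ m, bmat N F ε i m * X m = _
  rw [sum_two hne (fun m hm1 hm2 => by
    rw [bmat_apply_even h0 hlt]
    have e1 : (m : ℕ) ≠ (i : ℕ) := fun h => hm1 (Fin.ext h)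
    have e2 : (m : ℕ) ≠ (i : ℕ) + 1 := fun h => hm2 (Fin.ext h)
    simp [e1, e2])]
  rw [bmat_apply_even h0 hlt i, bmat_apply_even h0 hlt i']
  have : (i' : ℕ) = (i : ℕ) + 1 := rfl
  rw [if_pos rfl, if_neg (by omega : ¬ (i' : ℕ) = (i : ℕ)), if_pos this]
  ring

lemma mulVec_apply_last {i : Fin N} (h0 : (i : ℕ) % 2 = 0) (hge : ¬ ((i : ℕ) + 1 < N))
    (X : Fin N → ℝ) : (bmat N F ε).mulVec X i = ε * X i := by
  show ∑ m, bmat N F ε i m * X m = _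
  rw [Finset.sum_eq_single i (fun m _ hm => by
    rw [bmat_apply_last h0 hge]; simp [hm]) (by simp)]
  rw [bmat_apply_last h0 hge i, if_pos rfl]

lemma mulVec_apply_odd {i : Fin N} (h1 : (i : ℕ) % 2 = 1) (hplt : (i : ℕ) - 1 < N)
    (X : Fin N → ℝ) :
    (bmat N F ε).mulVec X i
      = Real.sin (F ((i : ℕ) / 2)) * X ⟨(i : ℕ) - 1, hplt⟩
        + Real.cos (F ((i : ℕ) / 2)) * X i := by
  set p : Fin N := ⟨(i : ℕ) - 1, hplt⟩ with hp
  have hpv : (p : ℕ) = (i : ℕ) - 1 := rfl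
  have hne : p ≠ i := by
    intro h; apply absurd (congrArg Fin.val h); rw [hpv]; omega
  show ∑ m, bmat N F ε i m * X m = _
  rw [sum_two hne (fun m hm1 hm2 => by
    rw [bmat_apply_odd h1]
    have e1 : (m : ℕ) ≠ (i : ℕ) - 1 := fun h => hm1 (Fin.ext (by rw [h, hpv]))
    have e2 : (m : ℕ) ≠ (i : ℕ) := fun h => hm2 (Fin.ext h)
    simp [e1, e2])]
  rw [bmat_apply_odd h1 p, bmat_apply_odd h1 i]
  have h2 : ¬ (i : ℕ) = (i : ℕ) - 1 := by omega
  simp [hpv, h2]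

def isFix (N : ℕ) (F : ℕ → ℝ) (ε t : ℝ) (i : ℕ) : Prop :=
  if i % 2 = 0 ∧ N ≤ i + 1 then ε = t else Real.cos (F (i / 2)) = t

lemma mulVec_eq_smul_iff (t : ℝ) (ht : t = 1 ∨ t = -1) (X : Fin N → ℝ) :
    (bmat N F ε).mulVec X = t • X ↔ ∀ i : Fin N, ¬ isFix N F ε t (i : ℕ) → X i = 0 := by
  constructor
  · intro h i hfix
    have hm : ∀ m : Fin N, (bmat N F ε).mulVec X m = t * X m := fun m => by
      rw [h]; rfl
    rcases Nat.even_or_odd (i : ℕ) with he | ho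
    · have h0 : (i : ℕ) % 2 = 0 := Nat.even_iff.mp he
      by_cases hlt : (i : ℕ) + 1 < N
      · have hcond : ¬ ((i : ℕ) % 2 = 0 ∧ N ≤ (i : ℕ) + 1) := by omega
        rw [isFix, if_neg hcond] at hfix
        set c := Real.cos (F ((i : ℕ) / 2)) with hc
        set s := Real.sin (F ((i : ℕ) / 2)) with hs
        set i' : Fin N := ⟨(i : ℕ) + 1, hlt⟩ with hi'
        have h1' : (i' : ℕ) % 2 = 1 := by show ((i:ℕ)+1) % 2 = 1; omega
        have hplt' : (i' : ℕ) - 1 < N := lt_of_le_of_lt (Nat.sub_le _ _) i'.isLt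
        have e1 : c * X i - s * X i' = t * X i := by
          rw [← mulVec_apply_even h0 hlt X]; exact hm i
        have e2 : s * X i + c * X i' = t * X i' := by
          have hdiv : ((i' : ℕ)) / 2 = (i : ℕ) / 2 := by show ((i:ℕ)+1)/2 = _; omega
          have hq : (⟨(i' : ℕ) - 1, hplt'⟩ : Fin N) = i := Fin.ext (by show (i:ℕ)+1-1 = (i:ℕ); omega)
          have := mulVec_apply_odd (F := F) (ε := ε) h1' hplt' X
          rw [hdiv, hq] at this
          rw [← this]; exact hm i'
        have pyth : s ^ 2 + c ^ 2 = 1 := Real.sin_sq_add_cos_sq _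
        have key : ((c - t) ^ 2 + s ^ 2) * X i = 0 := by
          linear_combination (c - t) * e1 + s * e2
        have hfac : (c - t) ^ 2 + s ^ 2 ≠ 0 := by
          intro h0'
          apply hfix
          have h1 : (c - t) ^ 2 = 0 := by nlinarith [sq_nonneg s, sq_nonneg (c - t)]
          have := pow_eq_zero_iff (n := 2) (by norm_num) |>.mp h1
          linarith [sub_eq_zero.mp this]
        exact (mul_eq_zero.mp key).resolve_left hfac
      · rw [isFix, if_pos ⟨h0, by omega⟩] at hfix
        have e := hm i
        rw [mulVec_apply_last h0 hlt X] at e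
        have h' : (ε - t) * X i = 0 := by linarith
        rcases mul_eq_zero.mp h' with h'' | h''
        · exact absurd (by linarith [sub_eq_zero.mp h'']) hfix
        · exact h''
    · have h1 : (i : ℕ) % 2 = 1 := Nat.odd_iff.mp ho
      have hcond : ¬ ((i : ℕ) % 2 = 0 ∧ N ≤ (i : ℕ) + 1) := by omega
      rw [isFix, if_neg hcond] at hfix
      set c := Real.cos (F ((i : ℕ) / 2)) with hc
      set s := Real.sin (F ((i : ℕ) / 2)) with hs
      have hplt : (i : ℕ) - 1 < N := lt_of_le_of_lt (Nat.sub_le _ _) i.isLt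
      set p : Fin N := ⟨(i : ℕ) - 1, hplt⟩ with hp
      have hp0 : (p : ℕ) % 2 = 0 := by show ((i:ℕ)-1) % 2 = 0; omega
      have hplt2 : (p : ℕ) + 1 < N := by
        show (i:ℕ) - 1 + 1 < N; have := i.isLt; omega
      have hpdiv : (p : ℕ) / 2 = (i : ℕ) / 2 := by show ((i:ℕ)-1)/2 = _; omega
      have hq : (⟨(p : ℕ) + 1, hplt2⟩ : Fin N) = i := Fin.ext (by show (i:ℕ)-1+1 = (i:ℕ); omega)
      have e1 : c * X p - s * X i = t * X p := by
        have := mulVec_apply_even (F := F) (ε := ε) hp0 hplt2 X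
        rw [hpdiv, hq] at this
        rw [← this]; exact hm p
      have e2 : s * X p + c * X i = t * X i := by
        rw [← mulVec_apply_odd h1 hplt X]; exact hm i
      have pyth : s ^ 2 + c ^ 2 = 1 := Real.sin_sq_add_cos_sq _
      have key : ((c - t) ^ 2 + s ^ 2) * X i = 0 := by
        linear_combination (- s) * e1 + (c - t) * e2
      have hfac : (c - t) ^ 2 + s ^ 2 ≠ 0 := by
        intro h0'
        apply hfix
        have h1' : (c - t) ^ 2 = 0 := by nlinarith [sq_nonneg s, sq_nonneg (c - t)]
        have := pow_eq_zero_iff (n := 2) (by norm_num) |>.mp h1'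
        linarith [sub_eq_zero.mp this]
      exact (mul_eq_zero.mp key).resolve_left hfac
  · intro hall
    have ht2 : t ^ 2 = 1 := by rcases ht with rfl | rfl <;> norm_num
    funext i
    rw [Pi.smul_apply, smul_eq_mul]
    rcases Nat.even_or_odd (i : ℕ) with he | ho
    · have h0 : (i : ℕ) % 2 = 0 := Nat.even_iff.mp he
      by_cases hlt : (i : ℕ) + 1 < N
      · rw [mulVec_apply_even h0 hlt X]
        set c := Real.cos (F ((i : ℕ) / 2)) with hc
        set s := Real.sin (F ((i : ℕ) / 2)) with hs
        have pyth : s ^ 2 + c ^ 2 = 1 := Real.sin_sq_add_cos_sq _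
        by_cases hcf : c = t
        · have hs0 : s = 0 := by
            have : s ^ 2 = 0 := by rw [hcf] at pyth; nlinarith
            exact pow_eq_zero_iff (n := 2) (by norm_num) |>.mp this
          rw [hcf, hs0]; ring
        · have hx : X i = 0 := hall i (by rw [isFix, if_neg (by omega)]; exact hcf)
          have hy : X ⟨(i : ℕ) + 1, hlt⟩ = 0 := by
            apply hall ⟨(i : ℕ) + 1, hlt⟩
            rw [isFix, if_neg (by simp; omega)]
            have : ((i : ℕ) + 1) / 2 = (i : ℕ) / 2 := by omega
            simpa [this] using hcf
          rw [hx, hy]; ring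
      · by_cases hef : ε = t
        · rw [mulVec_apply_last h0 hlt X, hef]
        · have hx : X i = 0 := hall i (by rw [isFix, if_pos ⟨h0, by omega⟩]; exact hef)
          rw [mulVec_apply_last h0 hlt X, hx]; ring
    · have h1 : (i : ℕ) % 2 = 1 := Nat.odd_iff.mp ho
      have hplt : (i : ℕ) - 1 < N := lt_of_le_of_lt (Nat.sub_le _ _) i.isLt
      rw [mulVec_apply_odd h1 hplt X]
      set c := Real.cos (F ((i : ℕ) / 2)) with hc
      set s := Real.sin (F ((i : ℕ) / 2)) with hs
      have pyth : s ^ 2 + c ^ 2 = 1 := Real.sin_sq_add_cos_sq _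
      by_cases hcf : c = t
      · have hs0 : s = 0 := by
          have : s ^ 2 = 0 := by rw [hcf] at pyth; nlinarith
          exact pow_eq_zero_iff (n := 2) (by norm_num) |>.mp this
        rw [hcf, hs0]; ring
      · have hx : X i = 0 := hall i (by rw [isFix, if_neg (by omega)]; exact hcf)
        have hy : X ⟨(i : ℕ) - 1, hplt⟩ = 0 := by
          apply hall ⟨(i : ℕ) - 1, hplt⟩
          rw [isFix, if_neg (by simp; omega)]
          have : ((i : ℕ) - 1) / 2 = (i : ℕ) / 2 := by omega
          simpa [this] using hcf
        rw [hx, hy]; ring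

def coordSub (N : ℕ) (S : Finset (Fin N)) : Submodule ℝ (Fin N → ℝ) where
  carrier := {X | ∀ i ∉ S, X i = 0}
  add_mem' := fun ha hb i hi => by
    simp only [Pi.add_apply, ha i hi, hb i hi, add_zero]
  zero_mem' := fun i _ => rfl
  smul_mem' := fun c X hX i hi => by simp only [Pi.smul_apply, hX i hi, smul_zero]

lemma mem_coordSub {N : ℕ} {S : Finset (Fin N)} {X : Fin N → ℝ} :
    X ∈ coordSub N S ↔ ∀ i ∉ S, X i = 0 := Iff.rfl

def coordEquiv (N : ℕ) (S : Finset (Fin N)) :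
    coordSub N S ≃ₗ[ℝ] ({x // x ∈ S} → ℝ) where
  toFun X i := X.1 i.1
  map_add' X Y := rfl
  map_smul' c X := rfl
  invFun Y := ⟨fun m => if h : m ∈ S then Y ⟨m, h⟩ else 0, fun i hi => dif_neg hi⟩
  left_inv X := Subtype.ext (funext fun m => by
    by_cases h : m ∈ S
    · simp [h]
    · simp [h, X.2 m h])
  right_inv Y := funext fun i => by simp

lemma finrank_coordSub (N : ℕ) (S : Finset (Fin N)) :
    Module.finrank ℝ (coordSub N S) = S.card := by
  rw [(coordEquiv N S).finrank_eq, Module.finrank_fintype_fun_eq_card, Fintype.card_coe]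

lemma sphere_homeo (N : ℕ) (S : Finset (Fin N)) (s : ℕ) (hs : S.card = s) :
    Nonempty ({X : Fin N → ℝ // (∑ i, (X i) ^ 2 = 1) ∧ ∀ i ∉ S, X i = 0} ≃ₜ
      {Y : Fin s → ℝ // ∑ i, (Y i) ^ 2 = 1}) := by
  subst hs
  let e : Fin S.card ≃o {x // x ∈ S} := S.orderIsoOfFin rfl
  have hsum : ∀ X : Fin N → ℝ, (∀ i ∉ S, X i = 0) →
      ∑ i, (X (e i)) ^ 2 = ∑ i, (X i) ^ 2 := by
    intro X hX
    calc ∑ i, X (e i) ^ 2 = ∑ y : {x // x ∈ S}, X y ^ 2 :=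
          e.toEquiv.sum_comp (fun y => X (y : Fin N) ^ 2)
      _ = ∑ i ∈ S, X i ^ 2 := Finset.sum_attach S fun i => X i ^ 2
      _ = ∑ i, X i ^ 2 := Finset.sum_subset (Finset.subset_univ S)
          (fun x _ hx => by rw [hX x hx]; ring)
  refine ⟨{
    toFun := fun X => ⟨fun i => X.1 (e i), by rw [hsum X.1 X.2.2]; exact X.2.1⟩
    invFun := fun Y => ⟨fun m => if h : m ∈ S then Y.1 (e.symm ⟨m, h⟩) else 0,
      ?_, fun i hi => dif_neg hi⟩
    left_inv := ?_
    right_inv := ?_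
    continuous_toFun := ?_
    continuous_invFun := ?_ }⟩
  · set X' : Fin N → ℝ := fun m => if h : m ∈ S then Y.1 (e.symm ⟨m, h⟩) else 0 with hX'
    have hsupp : ∀ i ∉ S, X' i = 0 := fun i hi => dif_neg hi
    have h2 : ∀ i, X' (e i) = Y.1 i := by
      intro i
      have hmem : ((e i : {x // x ∈ S}) : Fin N) ∈ S := (e i).2
      rw [hX']
      simp only [dif_pos hmem]
      congr 1
      rw [show (⟨((e i : {x // x ∈ S}) : Fin N), hmem⟩ : {x // x ∈ S}) = e i from Subtype.ext rfl]
      exact congrArg Y.1 (e.symm_apply_apply i)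
    rw [← hsum X' hsupp]
    calc ∑ i, X' (e i) ^ 2 = ∑ i, Y.1 i ^ 2 := by simp only [h2]
      _ = 1 := Y.2
  · rintro ⟨X, hX1, hX2⟩
    apply Subtype.ext
    funext m
    by_cases h : m ∈ S
    · simp only [dif_pos h]
      congr 1
      exact congrArg Subtype.val (e.apply_symm_apply ⟨m, h⟩)
    · simp only [dif_neg h]
      exact (hX2 m h).symm
  · rintro ⟨Y, hY⟩
    apply Subtype.ext
    funext i
    have hmem : ((e i : {x // x ∈ S}) : Fin N) ∈ S := (e i).2
    simp only [dif_pos hmem]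
    congr 1
    rw [show (⟨((e i : {x // x ∈ S}) : Fin N), hmem⟩ : {x // x ∈ S}) = e i from Subtype.ext rfl]
    exact e.symm_apply_apply i
  · apply Continuous.subtype_mk
    exact continuous_pi fun i => (continuous_apply _).comp continuous_subtype_val
  · apply Continuous.subtype_mk
    apply continuous_pi
    intro m
    by_cases h : m ∈ S
    · simp only [dif_pos h]
      exact (continuous_apply _).comp continuous_subtype_val
    · simp only [dif_neg h]
      exact continuous_const

lemma card_filter_fin (N : ℕ) (p : ℕ → Prop) [DecidablePred p] :
    ((Finset.univ : Finset (Fin N)).filter (fun i : Fin N => p (i : ℕ))).card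
      = ((Finset.range N).filter p).card := by
  rw [← Finset.card_image_of_injective
    ((Finset.univ : Finset (Fin N)).filter (fun i : Fin N => p (i : ℕ))) Fin.val_injective]
  congr 1
  ext m
  simp only [Finset.mem_image, Finset.mem_filter, Finset.mem_univ, true_and, Finset.mem_range]
  constructor
  · rintro ⟨a, ha, rfl⟩; exact ⟨a.isLt, ha⟩
  · rintro ⟨hm, hp⟩; exact ⟨⟨m, hm⟩, hp, rfl⟩

lemma filter_div2 (B : ℕ) (Q : ℕ → Prop) [DecidablePred Q] :
    ((Finset.range (2 * B)).filter (fun i => Q (i / 2))).card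
      = 2 * ((Finset.range B).filter Q).card := by
  induction B with
  | zero => simp
  | succ m ih =>
    have e1 : (2 * m + 1) / 2 = m := by omega
    have e2 : (2 * m) / 2 = m := by omega
    rw [show 2 * (m + 1) = (2 * m + 1) + 1 by ring, Finset.range_add_one, Finset.range_add_one,
      Finset.range_add_one, Finset.filter_insert, Finset.filter_insert, Finset.filter_insert,
      e1, e2]
    by_cases hq : Q m
    · rw [if_pos hq, if_pos hq, if_pos hq]
      rw [Finset.card_insert_of_notMem (by
        simp only [Finset.mem_insert, Finset.mem_filter, Finset.mem_range]; omega)]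
      rw [Finset.card_insert_of_notMem (by
        simp only [Finset.mem_filter, Finset.mem_range]; omega)]
      rw [Finset.card_insert_of_notMem (by
        simp only [Finset.mem_filter, Finset.mem_range]; omega)]
      rw [ih]
      ring
    · rw [if_neg hq, if_neg hq, if_neg hq, ih]

lemma mod_shift (c m : ℕ) (hc : 0 < c) :
    (m + 1) % (2 * c) = c ↔ (m + 1 + c) % (2 * c) = 0 := by
  have h2c : 0 < 2 * c := by omega
  constructor
  · intro h
    conv_lhs => rw [← Nat.div_add_mod (m + 1) (2 * c), h]
    rw [show 2 * c * ((m + 1) / (2 * c)) + c + c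
        = 2 * c * ((m + 1) / (2 * c) + 1) by ring]
    exact Nat.mul_mod_right _ _
  · intro h
    have hr : (m + 1) % (2 * c) < 2 * c := Nat.mod_lt _ h2c
    have hco : (m + 1 + c) % (2 * c) = ((m + 1) % (2 * c) + c) % (2 * c) := by
      conv_lhs => rw [Nat.add_mod, Nat.mod_eq_of_lt (show c < 2 * c by omega)]
    rw [hco] at h
    obtain ⟨s, hs⟩ := Nat.dvd_of_mod_eq_zero h
    rcases s with _ | _ | s
    · omega
    · omega
    · exfalso
      have hge : 2 * c * (s + 1 + 1) ≥ 2 * c * 2 := Nat.mul_le_mul_left _ (by omega)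
      generalize hX : 2 * c * (s + 1 + 1) = X at hs hge
      omega

lemma count_mod (c : ℕ) (hc : 0 < c) (B : ℕ) :
    ((Finset.range B).filter (fun b => (b + 1) % (2 * c) = c)).card
      = (B + c) / (2 * c) := by
  induction B with
  | zero => simp [Nat.div_eq_of_lt (show c < 2 * c by omega)]
  | succ m ih =>
    rw [Finset.range_add_one, Finset.filter_insert]
    have hsd : ((m + c) + 1) / (2 * c) = (m + c) / (2 * c)
        + if 2 * c ∣ (m + c) + 1 then 1 else 0 := Nat.succ_div
    by_cases hq : (m + 1) % (2 * c) = c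
    · rw [if_pos hq, Finset.card_insert_of_notMem (by
        simp only [Finset.mem_filter, Finset.mem_range]; omega), ih]
      have hd : 2 * c ∣ (m + c) + 1 := Nat.dvd_of_mod_eq_zero (by
        rw [show m + c + 1 = m + 1 + c by ring]
        exact (mod_shift c m hc).mp hq)
      rw [show m + 1 + c = (m + c) + 1 by ring, hsd, if_pos hd]
    · rw [if_neg hq, ih]
      have hd : ¬ 2 * c ∣ (m + c) + 1 := by
        intro hdvd
        apply hq
        apply (mod_shift c m hc).mpr
        rw [show m + 1 + c = (m + c) + 1 by ring]
        obtain ⟨t, ht⟩ := hdvd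
        rw [ht]
        exact Nat.mul_mod_right _ _
      rw [show m + 1 + c = (m + c) + 1 by ring, hsd, if_neg hd, add_zero]

lemma card_pp (N : ℕ) (q : ℕ → Prop) (r : Prop) [DecidablePred q] [Decidable r] :
    ((Finset.range N).filter (fun i => if i % 2 = 0 ∧ N ≤ i + 1 then r else q (i / 2))).card
      = 2 * ((Finset.range (N / 2)).filter q).card
        + (if N % 2 = 1 ∧ r then 1 else 0) := by
  rcases Nat.even_or_odd N with he | ho
  · obtain ⟨B, hB⟩ := he
    have hN : N = 2 * B := by omega
    subst hN
    have hcg : ∀ i ∈ Finset.range (2 * B),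
        (if i % 2 = 0 ∧ 2 * B ≤ i + 1 then r else q (i / 2)) = q (i / 2) := by
      intro i hi
      rw [Finset.mem_range] at hi
      rw [if_neg (by omega)]
    rw [Finset.filter_congr (fun i hi => by rw [hcg i hi]), filter_div2,
      show (2 * B) / 2 = B by omega]
    have : ¬ ((2 * B) % 2 = 1 ∧ r) := by
      rintro ⟨h, -⟩; omega
    rw [if_neg this, add_zero]
  · obtain ⟨B, hB⟩ := ho
    subst hB
    rw [show Finset.range (2 * B + 1) = insert (2 * B) (Finset.range (2 * B))
      from Finset.range_add_one, Finset.filter_insert]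
    have hpa : (if (2 * B) % 2 = 0 ∧ 2 * B + 1 ≤ 2 * B + 1 then r else q ((2 * B) / 2)) = r := by
      rw [if_pos (by omega)]
    have hcg : ∀ i ∈ Finset.range (2 * B),
        (if i % 2 = 0 ∧ 2 * B + 1 ≤ i + 1 then r else q (i / 2)) = q (i / 2) := by
      intro i hi
      rw [Finset.mem_range] at hi
      rw [if_neg (by omega)]
    have hd2 : (2 * B + 1) / 2 = B := by omega
    have hm2 : (2 * B + 1) % 2 = 1 := by omega
    rw [Finset.filter_congr (fun i hi => by rw [hcg i hi]), hd2, hm2]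
    by_cases hr : r
    · rw [if_pos (by rw [hpa]; exact hr)]
      rw [Finset.card_insert_of_notMem (by
        simp only [Finset.mem_filter, Finset.mem_range]; omega)]
      rw [filter_div2, if_pos ⟨rfl, hr⟩]
    · rw [if_neg (by rw [hpa]; exact hr)]
      rw [filter_div2, if_neg (by rintro ⟨-, h⟩; exact hr h), add_zero]

lemma divh (q x r : ℕ) (hq : 0 < q) (hr : r < q) : (q * x + r) / q = x := by
  rw [Nat.mul_add_div hq, Nat.div_eq_of_lt hr, add_zero]

lemma cos_eq_one_div (p q : ℕ) (hq : 0 < q) :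
    Real.cos (2 * Real.pi * (p : ℝ) / q) = 1 ↔ q ∣ p := by
  have hq0 : (q : ℝ) ≠ 0 := Nat.cast_ne_zero.mpr hq.ne'
  have hπ : Real.pi ≠ 0 := Real.pi_ne_zero
  rw [Real.cos_eq_one_iff]
  constructor
  · rintro ⟨m, hm⟩
    have h2 : (m : ℝ) * q = p := by
      have h3 := congrArg (fun x : ℝ => x * q) hm
      rw [div_mul_cancel₀ _ hq0] at h3
      have h4 : ((m : ℝ) * q) * (2 * Real.pi) = (p : ℝ) * (2 * Real.pi) := by
        linear_combination h3
      exact mul_right_cancel₀ (by positivity) h4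
    have h3 : (m * q : ℤ) = (p : ℤ) := by exact_mod_cast h2
    have : (q : ℤ) ∣ (p : ℤ) := ⟨m, by linarith⟩
    exact_mod_cast this
  · rintro ⟨t, rfl⟩
    refine ⟨t, ?_⟩
    rw [eq_div_iff hq0]
    push_cast
    ring

lemma cos_eq_neg_one_div (p q : ℕ) (hq : 0 < q) (hp : 0 < p) :
    Real.cos (2 * Real.pi * (p : ℝ) / q) = -1 ↔ ∃ t : ℕ, 2 * p = q * (2 * t + 1) := by
  have hq0 : (q : ℝ) ≠ 0 := Nat.cast_ne_zero.mpr hq.ne'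
  have hπ : Real.pi ≠ 0 := Real.pi_ne_zero
  rw [Real.cos_eq_neg_one_iff]
  constructor
  · rintro ⟨m, hm⟩
    have h2 : (2 * (p : ℝ)) = q * (2 * (m : ℝ) + 1) := by
      have h3 := congrArg (fun x : ℝ => x * q) hm
      rw [div_mul_cancel₀ _ hq0] at h3
      have h4 : (2 * (p : ℝ)) * Real.pi = (q * (2 * (m : ℝ) + 1)) * Real.pi := by
        linear_combination -h3
      exact mul_right_cancel₀ hπ h4
    have hm0 : 0 ≤ m := by
      by_contra h
      push_neg at h
      have hm1' : m ≤ -1 := by omega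
      have hm1 : (m : ℝ) ≤ -1 := by exact_mod_cast hm1'
      have hqr : (1 : ℝ) ≤ (q : ℝ) := by exact_mod_cast hq
      have hpr : (1 : ℝ) ≤ (p : ℝ) := by exact_mod_cast hp
      nlinarith [h2]
    lift m to ℕ using hm0 with t
    refine ⟨t, ?_⟩
    exact_mod_cast h2
  · rintro ⟨t, ht⟩
    refine ⟨t, ?_⟩
    have h2 : (2 * (p : ℝ)) = q * (2 * (t : ℝ) + 1) := by exact_mod_cast ht
    rw [eq_div_iff hq0]
    linear_combination (-Real.pi) * h2

lemma arith_fix (j k : ℕ) (hj : 1 ≤ j) (hk : 2 ≤ k) :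
    2 * ((j * k - 1) / 2 / k) + (if (j * k - 1) % 2 = 1 ∧ Even j then 1 else 0) = j - 1 := by
  rw [Nat.div_div_eq_div_mul]
  rcases Nat.even_or_odd j with hje | hjo
  · obtain ⟨a, ha⟩ := hje
    obtain ⟨a', rfl⟩ : ∃ a', a = a' + 1 := ⟨a - 1, by omega⟩
    have hj2 : j = 2 * (a' + 1) := by omega
    subst hj2
    have h1 : 2 * (a' + 1) * k = 2 * k * a' + 2 * k := by ring
    have h2 : 2 * (a' + 1) * k - 1 = 2 * k * a' + (2 * k - 1) := by
      rw [h1, Nat.add_sub_assoc (by omega)]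
    rw [h2, divh (2 * k) a' (2 * k - 1) (by omega) (by omega)]
    have h3 : (2 * k * a' + (2 * k - 1)) % 2 = 1 := by
      rw [show 2 * k * a' = 2 * (k * a') by ring, add_comm, Nat.add_mul_mod_self_left]
      omega
    rw [h3, if_pos ⟨rfl, ⟨a' + 1, by ring⟩⟩]
    omega
  · obtain ⟨a, rfl⟩ := hjo
    have h1 : (2 * a + 1) * k = 2 * k * a + k := by ring
    have h2 : (2 * a + 1) * k - 1 = 2 * k * a + (k - 1) := by
      rw [h1, Nat.add_sub_assoc (by omega)]
    rw [h2, divh (2 * k) a (k - 1) (by omega) (by omega)]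
    have hno : ¬ ((2 * k * a + (k - 1)) % 2 = 1 ∧ Even (2 * a + 1)) := by
      rintro ⟨-, he⟩
      obtain ⟨r, hr⟩ := he
      omega
    rw [if_neg hno]
    omega

lemma arith_neg (j c : ℕ) (hj : 1 ≤ j) (hc : 1 ≤ c) :
    2 * (((j * (2 * c) - 1) / 2 + c) / (2 * c))
      + (if (j * (2 * c) - 1) % 2 = 1 ∧ Odd j then 1 else 0) = j := by
  have hP : 1 ≤ j * c := Nat.mul_pos hj hc
  have hB : (j * (2 * c) - 1) / 2 = j * c - 1 := by
    rw [show j * (2 * c) = 2 * (j * c) by ring]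
    generalize hQ : j * c = P at hP ⊢
    omega
  have hm : (j * (2 * c) - 1) % 2 = 1 := by
    rw [show j * (2 * c) = 2 * (j * c) by ring]
    generalize hQ : j * c = P at hP ⊢
    omega
  rw [hB, hm]
  rcases Nat.even_or_odd j with hje | hjo
  · obtain ⟨a, ha⟩ := hje
    obtain ⟨a', rfl⟩ : ∃ a', a = a' + 1 := ⟨a - 1, by omega⟩
    have hj2 : j = 2 * (a' + 1) := by omega
    subst hj2
    have h1 : 2 * (a' + 1) * c = 2 * c * (a' + 1) := by ring
    have hP1 : 1 ≤ 2 * c * (a' + 1) := Nat.mul_pos (by omega) (by omega)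
    have h2 : 2 * (a' + 1) * c - 1 + c = 2 * c * (a' + 1) + (c - 1) := by
      rw [h1]
      generalize 2 * c * (a' + 1) = P at hP1 ⊢
      omega
    rw [h2, divh (2 * c) (a' + 1) (c - 1) (by omega) (by omega)]
    have hno : ¬ Odd (2 * (a' + 1)) := by
      rintro ⟨r, hr⟩
      omega
    rw [if_neg (by rintro ⟨-, h⟩; exact hno h)]
    omega
  · obtain ⟨a, rfl⟩ := hjo
    have h1 : (2 * a + 1) * c = 2 * c * a + c := by ring
    have hP1 : (0:ℕ) ≤ 2 * c * a := Nat.zero_le _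
    have h2 : (2 * a + 1) * c - 1 + c = 2 * c * a + (2 * c - 1) := by
      rw [h1]
      generalize 2 * c * a = P
      omega
    rw [h2, divh (2 * c) a (2 * c - 1) (by omega) (by omega)]
    rw [if_pos ⟨rfl, ⟨a, rfl⟩⟩]

lemma mod_char (c b : ℕ) (hc : 0 < c) :
    (b + 1) % (2 * c) = c ↔ ∃ t, b + 1 = c * (2 * t + 1) := by
  constructor
  · intro h
    refine ⟨(b + 1) / (2 * c), ?_⟩
    have hd := Nat.div_add_mod (b + 1) (2 * c)
    rw [h] at hd
    generalize hq : (b + 1) / (2 * c) = q at hd ⊢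
    rw [show c * (2 * q + 1) = 2 * c * q + c by ring]
    exact hd.symm
  · rintro ⟨t, ht⟩
    rw [ht, show c * (2 * t + 1) = c + 2 * c * t by ring, Nat.add_mul_mod_self_left,
      Nat.mod_eq_of_lt (by omega)]

/-- For a proper divisor `j` of `n` with `k = n/j`:
(a) `{X : ℛ_n^j X = X}` has dimension `j − 1`;
(b) `{X : ℛ_n^j X = −X}` has dimension `0` when `k` is odd and dimension `j` when `k` is even.
Consequently `ℓ₊^j(n)` is homeomorphic to `S^{j-2}` and `ℓ₋^j(n)` is empty for odd `k`
and homeomorphic to `S^{j-1}` for even `k`. -/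
theorem fixed_spheres (n j k : ℕ) (hn : 3 ≤ n) (hj1 : 1 ≤ j) (hjn : j < n)
    (hdvd : j ∣ n) (hk : k = n / j) :
    (Module.finrank ℝ
      ↥(LinearMap.ker ((Rmat n ^ j).mulVecLin - LinearMap.id)) = j - 1) ∧
    (Odd k → Module.finrank ℝ
      ↥(LinearMap.ker ((Rmat n ^ j).mulVecLin + LinearMap.id)) = 0) ∧
    (Even k → Module.finrank ℝ
      ↥(LinearMap.ker ((Rmat n ^ j).mulVecLin + LinearMap.id)) = j) ∧
    Nonempty
      ({X : Fin (n - 1) → ℝ // (∑ i, (X i) ^ 2 = 1) ∧ (Rmat n ^ j).mulVec X = X} ≃ₜ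
        {Y : Fin (j - 1) → ℝ // ∑ i, (Y i) ^ 2 = 1}) ∧
    (Odd k →
      {X : Fin (n - 1) → ℝ | (∑ i, (X i) ^ 2 = 1) ∧ (Rmat n ^ j).mulVec X = -X} = ∅) ∧
    (Even k → Nonempty
      ({X : Fin (n - 1) → ℝ // (∑ i, (X i) ^ 2 = 1) ∧ (Rmat n ^ j).mulVec X = -X} ≃ₜ
        {Y : Fin j → ℝ // ∑ i, (Y i) ^ 2 = 1})) := by
  classical
  have hn0 : 0 < n := by omega
  have hj0 : 0 < j := hj1
  have hjk : n = j * k := by rw [hk, Nat.mul_div_cancel' hdvd]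
  have hk2 : 2 ≤ k := by
    by_contra h
    push_neg at h
    interval_cases k
    · simp at hjk; omega
    · simp at hjk; omega
  set N := n - 1 with hN
  set F' : ℕ → ℝ := fun b => 2 * Real.pi * ((j * (b + 1) : ℕ) : ℝ) / n with hF'
  set ε : ℝ := (-1 : ℝ) ^ j with hε
  have bmat_congr : ∀ {M : ℕ} {F G : ℕ → ℝ} {e e' : ℝ}, (∀ b, F b = G b) → e = e' →
      bmat M F e = bmat M G e' := by
    intro M F G e e' h he
    rw [funext h, he]
  have hpow : Rmat n ^ j = bmat N F' ε := by
    rw [rmat_eq, bmat_pow]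
    refine bmat_congr (fun b => ?_) rfl
    simp only [hF']
    push_cast
    ring
  have hchar : ∀ (t : ℝ), t = 1 ∨ t = -1 → ∀ X : Fin N → ℝ,
      ((Rmat n ^ j).mulVec X = t • X ↔
        ∀ i : Fin N, ¬ isFix N F' ε t (i : ℕ) → X i = 0) := by
    intro t ht X
    rw [hpow]
    exact mulVec_eq_smul_iff t ht X
  have hεone : (ε = 1) ↔ Even j := by
    constructor
    · intro h
      by_contra ho
      rw [hε, Odd.neg_one_pow (Nat.not_even_iff_odd.mp ho)] at h
      norm_num at h
    · intro h
      rw [hε, Even.neg_one_pow h]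
  have hεneg : (ε = -1) ↔ Odd j := by
    constructor
    · intro h
      by_contra ho
      rw [hε, Even.neg_one_pow (Nat.not_odd_iff_even.mp ho)] at h
      norm_num at h
    · intro h
      rw [hε, Odd.neg_one_pow h]
  have hfix1 : ∀ i : ℕ, isFix N F' ε 1 i ↔
      (if i % 2 = 0 ∧ N ≤ i + 1 then Even j else k ∣ (i / 2 + 1)) := by
    intro i
    rw [isFix]
    by_cases hcond : i % 2 = 0 ∧ N ≤ i + 1
    · rw [if_pos hcond, if_pos hcond]
      exact hεone
    · rw [if_neg hcond, if_neg hcond]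
      simp only [hF']
      rw [cos_eq_one_div (j * (i / 2 + 1)) n hn0, hjk]
      exact mul_dvd_mul_iff_left (show j ≠ 0 by omega)
  have hfixm : ∀ i : ℕ, isFix N F' ε (-1) i ↔
      (if i % 2 = 0 ∧ N ≤ i + 1 then Odd j
        else ∃ t : ℕ, 2 * (i / 2 + 1) = k * (2 * t + 1)) := by
    intro i
    rw [isFix]
    by_cases hcond : i % 2 = 0 ∧ N ≤ i + 1
    · rw [if_pos hcond, if_pos hcond]
      exact hεneg
    · rw [if_neg hcond, if_neg hcond]
      simp only [hF']
      rw [cos_eq_neg_one_div (j * (i / 2 + 1)) n hn0 (Nat.mul_pos hj0 (by omega))]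
      constructor
      · rintro ⟨t, ht⟩
        refine ⟨t, ?_⟩
        rw [hjk] at ht
        have h' : j * (2 * (i / 2 + 1)) = j * (k * (2 * t + 1)) := by
          rw [show j * (2 * (i / 2 + 1)) = 2 * (j * (i / 2 + 1)) by ring,
            show j * (k * (2 * t + 1)) = j * k * (2 * t + 1) by ring]
          exact ht
        exact Nat.eq_of_mul_eq_mul_left hj0 h'
      · rintro ⟨t, ht⟩
        refine ⟨t, ?_⟩
        rw [hjk, show 2 * (j * (i / 2 + 1)) = j * (2 * (i / 2 + 1)) by ring, ht]
        ring
  set S1 : Finset (Fin N) :=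
    Finset.univ.filter (fun i : Fin N => isFix N F' ε 1 (i : ℕ)) with hS1
  set Sm : Finset (Fin N) :=
    Finset.univ.filter (fun i : Fin N => isFix N F' ε (-1) (i : ℕ)) with hSm
  have hker1 : LinearMap.ker ((Rmat n ^ j).mulVecLin - LinearMap.id) = coordSub N S1 := by
    ext X
    rw [LinearMap.mem_ker, mem_coordSub]
    simp only [LinearMap.sub_apply, Matrix.mulVecLin_apply, LinearMap.id_apply, sub_eq_zero]
    have h2 := hchar 1 (Or.inl rfl) X
    rw [one_smul] at h2
    rw [h2]
    simp only [hS1, Finset.mem_filter, Finset.mem_univ, true_and]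
  have hkerm : LinearMap.ker ((Rmat n ^ j).mulVecLin + LinearMap.id) = coordSub N Sm := by
    ext X
    rw [LinearMap.mem_ker, mem_coordSub]
    simp only [LinearMap.add_apply, Matrix.mulVecLin_apply, LinearMap.id_apply,
      add_eq_zero_iff_eq_neg]
    have h2 := hchar (-1) (Or.inr rfl) X
    rw [neg_one_smul] at h2
    rw [h2]
    simp only [hSm, Finset.mem_filter, Finset.mem_univ, true_and]
  -- cardinality of S1
  have hNval : N = j * k - 1 := by rw [hN, hjk]
  have hcard1 : S1.card = j - 1 := by
    set P1 : ℕ → Prop := fun m =>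
      if m % 2 = 0 ∧ N ≤ m + 1 then Even j else k ∣ (m / 2 + 1) with hP1d
    have e1 : S1 = Finset.univ.filter (fun i : Fin N => P1 (i : ℕ)) :=
      Finset.filter_congr (fun i _ => by rw [hP1d]; exact hfix1 _)
    have e2 : (Finset.range N).filter P1 = (Finset.range N).filter
        (fun i => if i % 2 = 0 ∧ N ≤ i + 1 then Even j else (fun b => k ∣ (b + 1)) (i / 2)) :=
      Finset.filter_congr (fun x _ => Iff.rfl)
    rw [e1, card_filter_fin N P1, e2, card_pp N (fun b => k ∣ (b + 1)) (Even j),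
      Nat.card_multiples, hNval]
    exact arith_fix j k hj1 hk2
  refine ⟨?_, ?_, ?_, ?_, ?_, ?_⟩
  · rw [hker1, finrank_coordSub, hcard1]
  · -- Odd k : finrank 0
    intro hko
    have hSme : Sm = ∅ := by
      rw [hSm, Finset.filter_eq_empty_iff]
      intro i _
      rw [hfixm]
      by_cases hcond : (i : ℕ) % 2 = 0 ∧ N ≤ (i : ℕ) + 1
      · rw [if_pos hcond]
        have hNe : Even n := by
          have h1 := i.isLt
          have h2 := hcond.1
          have h3 := hcond.2
          rw [Nat.even_iff]
          omega
        rw [hjk] at hNe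
        have hje : Even j := (Nat.even_mul.mp hNe).resolve_right (Nat.not_even_iff_odd.mpr hko)
        exact Nat.not_odd_iff_even.mpr hje
      · rw [if_neg hcond]
        rintro ⟨t, ht⟩
        have hodd : Odd (k * (2 * t + 1)) := hko.mul (odd_two_mul_add_one t)
        have heven : Even (2 * ((i : ℕ) / 2 + 1)) := even_two_mul _
        rw [ht] at heven
        rw [Nat.even_iff] at heven
        rw [Nat.odd_iff] at hodd
        omega
    rw [hkerm, finrank_coordSub, hSme]
    simp
  · -- Even k : finrank j
    intro hke
    obtain ⟨c, hc⟩ := hke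
    have hkc : k = 2 * c := by omega
    have hc1 : 1 ≤ c := by omega
    have hbridge : ∀ b : ℕ, (∃ t, 2 * (b + 1) = k * (2 * t + 1)) ↔ (b + 1) % (2 * c) = c := by
      intro b
      rw [hkc]
      constructor
      · rintro ⟨t, ht⟩
        apply (mod_char c b hc1).mpr
        have ht' : 2 * (b + 1) = 2 * (c * (2 * t + 1)) := by rw [ht]; ring
        exact ⟨t, Nat.eq_of_mul_eq_mul_left (by omega) ht'⟩
      · intro h
        obtain ⟨t, ht⟩ := (mod_char c b hc1).mp h
        exact ⟨t, by rw [ht]; ring⟩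
    have hcardm : Sm.card = j := by
      set Pm : ℕ → Prop := fun m =>
        if m % 2 = 0 ∧ N ≤ m + 1 then Odd j else (m / 2 + 1) % (2 * c) = c with hPmd
      have e1 : Sm = Finset.univ.filter (fun i : Fin N => Pm (i : ℕ)) := by
        apply Finset.filter_congr
        intro i _
        rw [hfixm]
        show _ ↔ if (i : ℕ) % 2 = 0 ∧ N ≤ (i : ℕ) + 1 then Odd j
          else ((i : ℕ) / 2 + 1) % (2 * c) = c
        by_cases hcond : (i : ℕ) % 2 = 0 ∧ N ≤ (i : ℕ) + 1
        · rw [if_pos hcond, if_pos hcond]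
        · rw [if_neg hcond, if_neg hcond]
          exact hbridge _
      have e2 : (Finset.range N).filter Pm = (Finset.range N).filter
          (fun i => if i % 2 = 0 ∧ N ≤ i + 1 then Odd j
            else (fun b => (b + 1) % (2 * c) = c) (i / 2)) :=
        Finset.filter_congr (fun x _ => Iff.rfl)
      rw [e1, card_filter_fin N Pm, e2, card_pp N (fun b => (b + 1) % (2 * c) = c) (Odd j),
        count_mod c hc1, hNval, hkc]
      exact arith_neg j c hj1 hc1
    rw [hkerm, finrank_coordSub, hcardm]
  · -- homeomorphism for +1
    have hset : {X : Fin N → ℝ | (∑ i, (X i) ^ 2 = 1) ∧ (Rmat n ^ j).mulVec X = X}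
        = {X : Fin N → ℝ | (∑ i, (X i) ^ 2 = 1) ∧ ∀ i ∉ S1, X i = 0} := by
      ext X
      simp only [Set.mem_setOf_eq]
      apply and_congr_right
      intro _
      have h2 := hchar 1 (Or.inl rfl) X
      rw [one_smul] at h2
      rw [h2]
      simp only [hS1, Finset.mem_filter, Finset.mem_univ, true_and]
    obtain ⟨e⟩ := sphere_homeo N S1 (j - 1) hcard1
    exact ⟨(Homeomorph.setCongr hset).trans e⟩
  · -- Odd k : empty
    intro hko
    have hnofix : ∀ i : Fin N, ¬ isFix N F' ε (-1) (i : ℕ) := by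
      intro i
      rw [hfixm]
      by_cases hcond : (i : ℕ) % 2 = 0 ∧ N ≤ (i : ℕ) + 1
      · rw [if_pos hcond]
        have hNe : Even n := by
          have h1 := i.isLt
          have h2 := hcond.1
          have h3 := hcond.2
          rw [Nat.even_iff]
          omega
        rw [hjk] at hNe
        have hje : Even j := (Nat.even_mul.mp hNe).resolve_right (Nat.not_even_iff_odd.mpr hko)
        exact Nat.not_odd_iff_even.mpr hje
      · rw [if_neg hcond]
        rintro ⟨t, ht⟩
        have hodd : Odd (k * (2 * t + 1)) := hko.mul (odd_two_mul_add_one t)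
        have heven : Even (2 * ((i : ℕ) / 2 + 1)) := even_two_mul _
        rw [ht] at heven
        rw [Nat.even_iff] at heven
        rw [Nat.odd_iff] at hodd
        omega
    apply Set.eq_empty_iff_forall_notMem.mpr
    rintro X ⟨h1, h2⟩
    have h3 := hchar (-1) (Or.inr rfl) X
    rw [neg_one_smul] at h3
    have hz : ∀ i : Fin N, X i = 0 := fun i => (h3.mp h2) i (hnofix i)
    rw [Finset.sum_eq_zero (fun i _ => by rw [hz i]; ring)] at h1
    norm_num at h1
  · -- Even k : homeo to S^{j-1}
    intro hke
    obtain ⟨c, hc⟩ := hke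
    have hkc : k = 2 * c := by omega
    have hc1 : 1 ≤ c := by omega
    have hbridge : ∀ b : ℕ, (∃ t, 2 * (b + 1) = k * (2 * t + 1)) ↔ (b + 1) % (2 * c) = c := by
      intro b
      rw [hkc]
      constructor
      · rintro ⟨t, ht⟩
        apply (mod_char c b hc1).mpr
        have ht' : 2 * (b + 1) = 2 * (c * (2 * t + 1)) := by rw [ht]; ring
        exact ⟨t, Nat.eq_of_mul_eq_mul_left (by omega) ht'⟩
      · intro h
        obtain ⟨t, ht⟩ := (mod_char c b hc1).mp h
        exact ⟨t, by rw [ht]; ring⟩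
    have hcardm : Sm.card = j := by
      set Pm : ℕ → Prop := fun m =>
        if m % 2 = 0 ∧ N ≤ m + 1 then Odd j else (m / 2 + 1) % (2 * c) = c with hPmd
      have e1 : Sm = Finset.univ.filter (fun i : Fin N => Pm (i : ℕ)) := by
        apply Finset.filter_congr
        intro i _
        rw [hfixm]
        show _ ↔ if (i : ℕ) % 2 = 0 ∧ N ≤ (i : ℕ) + 1 then Odd j
          else ((i : ℕ) / 2 + 1) % (2 * c) = c
        by_cases hcond : (i : ℕ) % 2 = 0 ∧ N ≤ (i : ℕ) + 1
        · rw [if_pos hcond, if_pos hcond]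
        · rw [if_neg hcond, if_neg hcond]
          exact hbridge _
      have e2 : (Finset.range N).filter Pm = (Finset.range N).filter
          (fun i => if i % 2 = 0 ∧ N ≤ i + 1 then Odd j
            else (fun b => (b + 1) % (2 * c) = c) (i / 2)) :=
        Finset.filter_congr (fun x _ => Iff.rfl)
      rw [e1, card_filter_fin N Pm, e2, card_pp N (fun b => (b + 1) % (2 * c) = c) (Odd j),
        count_mod c hc1, hNval, hkc]
      exact arith_neg j c hj1 hc1
    have hset : {X : Fin N → ℝ | (∑ i, (X i) ^ 2 = 1) ∧ (Rmat n ^ j).mulVec X = -X}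
        = {X : Fin N → ℝ | (∑ i, (X i) ^ 2 = 1) ∧ ∀ i ∉ Sm, X i = 0} := by
      ext X
      simp only [Set.mem_setOf_eq]
      apply and_congr_right
      intro _
      have h2 := hchar (-1) (Or.inr rfl) X
      rw [neg_one_smul] at h2
      rw [h2]
      simp only [hSm, Finset.mem_filter, Finset.mem_univ, true_and]
    obtain ⟨e⟩ := sphere_homeo N Sm j hcardm
    exact ⟨(Homeomorph.setCongr hset).trans e⟩
end
end

section
/- Let n ≥ 3. The set {X ∈ ℝ^n : min_{1 ≤ j ≤ n} X_j = 0 and max_{1 ≤ j ≤ n} X_j = 1}, with the subspace topology of ℝ^n, is homeomorphic to the sphere S^{n−2}. (This set is the space of n-segments with ends at 0 and 1.) -/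
noncomputable section

section Aux

variable {m : ℕ}

private def neU : (Finset.univ : Finset (Fin (m + 2))).Nonempty := Finset.univ_nonempty

/-- append a zero coordinate -/
private def extZ (Y : Fin (m + 1) → ℝ) : Fin (m + 2) → ℝ := Fin.snoc Y 0

private def pfun (Y : Fin (m + 1) → ℝ) : ℝ :=
  Finset.univ.sup' neU (extZ Y) - Finset.univ.inf' neU (extZ Y)

private lemma continuous_extZ_apply (j : Fin (m + 2)) :
    Continuous fun Y : Fin (m + 1) → ℝ => extZ Y j := by
  induction j using Fin.lastCases with
  | last => simpa [extZ] using continuous_const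
  | cast i => simpa [extZ] using continuous_apply i

private lemma continuous_pfun : Continuous (pfun (m := m)) := by
  unfold pfun
  exact (Continuous.finset_sup'_apply neU fun i _ => continuous_extZ_apply i).sub
    (Continuous.finset_inf'_apply neU fun i _ => continuous_extZ_apply i)

private lemma extZ_smul (c : ℝ) (Y : Fin (m + 1) → ℝ) : extZ (c • Y) = c • extZ Y := by
  funext j
  induction j using Fin.lastCases with
  | last => simp [extZ]
  | cast i => simp [extZ]

private lemma sup'_smul (c : ℝ) (hc : 0 ≤ c) (v : Fin (m + 2) → ℝ) :
    Finset.univ.sup' neU (c • v) = c * Finset.univ.sup' neU v := by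
  rw [show Finset.univ.sup' neU (c • v) = Finset.univ.sup' neU ((fun x => c * x) ∘ v) from rfl,
    ← Finset.comp_sup'_eq_sup'_comp neU _ (fun a b => mul_max_of_nonneg a b hc)]

private lemma inf'_smul (c : ℝ) (hc : 0 ≤ c) (v : Fin (m + 2) → ℝ) :
    Finset.univ.inf' neU (c • v) = c * Finset.univ.inf' neU v := by
  rw [show Finset.univ.inf' neU (c • v) = Finset.univ.inf' neU ((fun x => c * x) ∘ v) from rfl,
    ← Finset.apply_inf'_eq_inf'_comp neU _ (fun a b => mul_min_of_nonneg a b hc)]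

private lemma pfun_smul (c : ℝ) (hc : 0 ≤ c) (Y : Fin (m + 1) → ℝ) :
    pfun (c • Y) = c * pfun Y := by
  unfold pfun
  rw [extZ_smul, sup'_smul c hc, inf'_smul c hc]; ring

private lemma pfun_pos (Y : Fin (m + 1) → ℝ) (hY : Y ≠ 0) : 0 < pfun Y := by
  obtain ⟨i, hi⟩ : ∃ i, Y i ≠ 0 := by
    by_contra h; push_neg at h; exact hY (funext h)
  have h1 : extZ Y (Fin.last (m + 1)) ≤ Finset.univ.sup' neU (extZ Y) :=
    Finset.le_sup' _ (Finset.mem_univ _)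
  have h2 : Finset.univ.inf' neU (extZ Y) ≤ extZ Y (Fin.last (m + 1)) :=
    Finset.inf'_le _ (Finset.mem_univ _)
  have h3 : extZ Y i.castSucc ≤ Finset.univ.sup' neU (extZ Y) :=
    Finset.le_sup' _ (Finset.mem_univ _)
  have h4 : Finset.univ.inf' neU (extZ Y) ≤ extZ Y i.castSucc :=
    Finset.inf'_le _ (Finset.mem_univ _)
  have e1 : extZ Y (Fin.last (m + 1)) = 0 := by simp [extZ]
  have e2 : extZ Y i.castSucc = Y i := by simp [extZ]
  rcases lt_or_gt_of_ne hi with h | h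
  · unfold pfun; rw [e1] at h1; rw [e2] at h4; linarith
  · unfold pfun; rw [e1] at h2; rw [e2] at h3; linarith

private lemma sup'_sub (c : ℝ) (v : Fin (m + 2) → ℝ) :
    Finset.univ.sup' neU (fun j => v j - c) = Finset.univ.sup' neU v - c :=
  (Finset.comp_sup'_eq_sup'_comp neU (fun x => x - c) (fun a b => by
    simp [max_sub_sub_right])).symm

private lemma inf'_sub (c : ℝ) (v : Fin (m + 2) → ℝ) :
    Finset.univ.inf' neU (fun j => v j - c) = Finset.univ.inf' neU v - c :=
  (Finset.apply_inf'_eq_inf'_comp neU (fun x => x - c) (fun a b => by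
    simp [min_sub_sub_right])).symm

/-- the q function -/
private def qfun (Y : Fin (m + 1) → ℝ) : ℝ := Real.sqrt (∑ i, Y i ^ 2)

private lemma continuous_qfun : Continuous (qfun (m := m)) :=
  Real.continuous_sqrt.comp (continuous_finset_sum _ fun i _ => (continuous_apply i).pow 2)

private lemma qfun_smul (c : ℝ) (hc : 0 ≤ c) (Y : Fin (m + 1) → ℝ) :
    qfun (c • Y) = c * qfun Y := by
  unfold qfun
  have : ∑ i, (c • Y) i ^ 2 = c ^ 2 * ∑ i, Y i ^ 2 := by
    rw [Finset.mul_sum]; congr 1; funext i; simp [mul_pow]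
  rw [this, Real.sqrt_mul (sq_nonneg c), Real.sqrt_sq hc]

private lemma qfun_pos (Y : Fin (m + 1) → ℝ) (hY : Y ≠ 0) : 0 < qfun Y := by
  obtain ⟨i, hi⟩ : ∃ i, Y i ≠ 0 := by
    by_contra h; push_neg at h; exact hY (funext h)
  apply Real.sqrt_pos.2
  have : (0:ℝ) < Y i ^ 2 := by positivity
  calc (0:ℝ) < Y i ^ 2 := this
    _ ≤ ∑ j, Y j ^ 2 := Finset.single_le_sum (fun j _ => sq_nonneg (Y j)) (Finset.mem_univ i)

/-- First homeomorphism. -/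
private def segHomeo :
    {X : Fin (m + 2) → ℝ // (⨅ j, X j) = 0 ∧ (⨆ j, X j) = 1} ≃ₜ
      {Y : Fin (m + 1) → ℝ // pfun Y = 1} := by
  have infEq : ∀ v : Fin (m + 2) → ℝ, (⨅ j, v j) = Finset.univ.inf' neU v :=
    fun v => (Finset.inf'_univ_eq_ciInf v).symm
  have supEq : ∀ v : Fin (m + 2) → ℝ, (⨆ j, v j) = Finset.univ.sup' neU v :=
    fun v => (Finset.sup'_univ_eq_ciSup v).symm
  have keyL : ∀ X : Fin (m + 2) → ℝ,
      extZ (fun i : Fin (m + 1) => X i.castSucc - X (Fin.last (m + 1))) =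
        fun j => X j - X (Fin.last (m + 1)) := by
    intro X; funext j
    induction j using Fin.lastCases with
    | last => simp [extZ]
    | cast i => simp [extZ]
  exact
  { toFun := fun X => ⟨fun i => X.1 i.castSucc - X.1 (Fin.last (m + 1)), by
      have hX := X.2
      rw [infEq, supEq] at hX
      unfold pfun
      rw [keyL, sup'_sub, inf'_sub, hX.1, hX.2]; ring⟩
    invFun := fun Y => ⟨fun j => extZ Y.1 j - Finset.univ.inf' neU (extZ Y.1), by
      have hY := Y.2
      unfold pfun at hY
      constructor
      · rw [infEq, inf'_sub]; ring
      · rw [supEq, sup'_sub]; linarith⟩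
    left_inv := fun X => by
      have hX := X.2
      rw [infEq] at hX
      ext1
      funext j
      simp only
      rw [keyL, inf'_sub, hX.1]
      ring
    right_inv := fun Y => by
      ext1
      funext i
      simp only [Fin.snoc_castSucc, Fin.snoc_last, extZ]
      ring
    continuous_toFun := by
      refine Continuous.subtype_mk (continuous_pi fun i => ?_) _
      exact ((continuous_apply (i.castSucc)).comp continuous_subtype_val).sub
        ((continuous_apply (Fin.last (m + 1))).comp continuous_subtype_val)
    continuous_invFun := by
      refine Continuous.subtype_mk (continuous_pi fun j => ?_) _
      exact ((continuous_extZ_apply j).comp continuous_subtype_val).sub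
        ((Continuous.finset_inf'_apply neU fun i _ =>
          continuous_extZ_apply i).comp continuous_subtype_val) }

end Aux

/-- Radial homeomorphism between level sets of two norm-like functions. -/
private def radialHomeomorph {k : ℕ} (p q : (Fin k → ℝ) → ℝ)
    (hpc : Continuous p) (hqc : Continuous q)
    (hph : ∀ c : ℝ, 0 ≤ c → ∀ x, p (c • x) = c * p x)
    (hqh : ∀ c : ℝ, 0 ≤ c → ∀ x, q (c • x) = c * q x)
    (hpp : ∀ x, x ≠ 0 → 0 < p x) (hqp : ∀ x, x ≠ 0 → 0 < q x) :
    {x : Fin k → ℝ // p x = 1} ≃ₜ {x : Fin k → ℝ // q x = 1} := by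
  have hp0 : p 0 = 0 := by simpa using hph 0 le_rfl 0
  have hq0 : q 0 = 0 := by simpa using hqh 0 le_rfl 0
  have hne : ∀ x : {x : Fin k → ℝ // p x = 1}, x.1 ≠ 0 := by
    rintro ⟨x, hx⟩ rfl; simp [hp0] at hx
  have hne' : ∀ x : {x : Fin k → ℝ // q x = 1}, x.1 ≠ 0 := by
    rintro ⟨x, hx⟩ rfl; simp [hq0] at hx
  exact
  { toFun := fun x => ⟨(q x.1)⁻¹ • x.1, by
      have hq := hqp x.1 (hne x)
      rw [hqh _ (inv_nonneg.2 hq.le)]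
      field_simp⟩
    invFun := fun y => ⟨(p y.1)⁻¹ • y.1, by
      have hp := hpp y.1 (hne' y)
      rw [hph _ (inv_nonneg.2 hp.le)]
      field_simp⟩
    left_inv := fun x => by
      have hq := hqp x.1 (hne x)
      ext1
      simp only
      rw [hph _ (inv_nonneg.2 hq.le), x.2, mul_one, smul_smul, inv_inv,
        mul_inv_cancel₀ hq.ne', one_smul]
    right_inv := fun y => by
      have hp := hpp y.1 (hne' y)
      ext1
      simp only
      rw [hqh _ (inv_nonneg.2 hp.le), y.2, mul_one, smul_smul, inv_inv,
        mul_inv_cancel₀ hp.ne', one_smul]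
    continuous_toFun := by
      refine Continuous.subtype_mk ?_ _
      exact ((hqc.comp continuous_subtype_val).inv₀
        (fun x => (hqp x.1 (hne x)).ne')).smul continuous_subtype_val
    continuous_invFun := by
      refine Continuous.subtype_mk ?_ _
      exact ((hpc.comp continuous_subtype_val).inv₀
        (fun y => (hpp y.1 (hne' y)).ne')).smul continuous_subtype_val }

/-- For `n ≥ 3`, the space of `n`-segments with ends at `0` and `1`,
`{X ∈ ℝ^n : min_j X_j = 0 and max_j X_j = 1}`, with the subspace topology of `ℝ^n`, is
homeomorphic to the unit sphere `S^{n-2} ⊆ ℝ^{n-1}`. -/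
theorem ends_zero_one_homeomorph_sphere (n : ℕ) (hn : 3 ≤ n) :
    Nonempty
      ({X : Fin n → ℝ // (⨅ j, X j) = 0 ∧ (⨆ j, X j) = 1} ≃ₜ
        {Y : Fin (n - 1) → ℝ // ∑ i, (Y i) ^ 2 = 1}) := by
  obtain ⟨m, rfl⟩ : ∃ m, n = m + 2 := ⟨n - 2, by omega⟩
  refine ⟨(segHomeo.trans (radialHomeomorph pfun qfun continuous_pfun continuous_qfun
    pfun_smul qfun_smul pfun_pos qfun_pos)).trans ?_⟩
  have hset : {x : Fin (m + 1) → ℝ | qfun x = 1} = {Y : Fin (m + 1) → ℝ | ∑ i, (Y i) ^ 2 = 1} := by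
    ext Y
    simp only [Set.mem_setOf_eq, qfun]
    constructor
    · intro h
      have h2 : Real.sqrt (∑ i, Y i ^ 2) ^ 2 = ∑ i, Y i ^ 2 :=
        Real.sq_sqrt (Finset.sum_nonneg fun i _ => sq_nonneg (Y i))
      rw [← h2, h]; norm_num
    · intro h; rw [h, Real.sqrt_one]
  exact Homeomorph.setCongr hset
end
end
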